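/- arXiv:2603.25806 — 2 statements merged into one kernel-verified Lean document; each statement's English description precedes it below -/
import Mathlib

section
/- Define Σ_F recursively on strings s of length at most L by: Σ_F(s) = f(s) if ℓ(s) = L, and Σ_F(s) = f(s) + ∏_{k=0}^{m-1} Σ_F(ks) if ℓ(s) < L. Then Σ_F(λ) = ∑_{τ ∈ 𝒯_L} ∏_{s ∈ τ} f(s), where λ is the empty string. -/
open Finset

/-- The finset of leaf sets of full rooted `m`-ary trees rooted at node `r`
(nodes identified with strings, children of `s` being `k :: s`) of depth at most `d`. -/
def trees (m : ℕ) : ℕ → List (Fin m) → Finset (Finset (List (Fin m)))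
  | 0, r => {{r}}
  | (d + 1), r =>
    insert {r}
      ((Fintype.piFinset (fun k : Fin m => trees m d (k :: r))).image
        (fun t => Finset.univ.biUnion (fun k => t k)))

/-- The recursively-defined sum functional `Σ_F`, with `d` the remaining depth
`L - ℓ(s)` below node `s`. -/
def SigmaF {m : ℕ} (f : List (Fin m) → ℝ) : ℕ → List (Fin m) → ℝ
  | 0, s => f s
  | (d + 1), s => f s + ∏ k : Fin m, SigmaF f d (k :: s)

/-! Both sides obey the same recursion. A tree of depth at most `d + 1` rooted at `r` is either
the single leaf `r` or the union of one subtree of depth at most `d` rooted at each child `k :: r`;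
these subtrees are disjoint and recovered from the union, since the leaves of the `k`-th one are
exactly the leaves with suffix `k :: r`. Summing the products over such unions is thus expanding
the product over `k` of the sums over subtrees. -/

theorem List.eq_of_cons_suffix_of_cons_suffix {α : Type*} {a b : α} {r s : List α}
    (ha : a :: r <:+ s) (hb : b :: r <:+ s) : a = b :=
  (List.cons.inj ((List.suffix_of_suffix_length_le ha hb le_rfl).eq_of_length rfl)).1

theorem suffix_of_mem_trees {m d : ℕ} {r s : List (Fin m)} {τ : Finset (List (Fin m))}
    (hτ : τ ∈ trees m d r) (hs : s ∈ τ) : r <:+ s := by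
  induction d generalizing r τ with
  | zero =>
    rw [trees, mem_singleton] at hτ
    subst hτ
    exact mem_singleton.1 hs ▸ List.suffix_refl r
  | succ d ih =>
    rw [trees, mem_insert, mem_image] at hτ
    rcases hτ with rfl | ⟨t, ht, rfl⟩
    · exact mem_singleton.1 hs ▸ List.suffix_refl r
    · obtain ⟨k, -, hk⟩ := mem_biUnion.1 hs
      exact (List.suffix_cons k r).trans (ih (Fintype.mem_piFinset.1 ht k) hk)

section Subtrees

variable {m d : ℕ} {r : List (Fin m)}

theorem pairwiseDisjoint_of_mem_piFinset_trees {t : Fin m → Finset (List (Fin m))}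
    (ht : t ∈ Fintype.piFinset fun k => trees m d (k :: r)) :
    ((univ : Finset (Fin m)) : Set (Fin m)).PairwiseDisjoint t := by
  intro k _ k' _ hkk'
  refine disjoint_left.2 fun s hs hs' => hkk' ?_
  exact List.eq_of_cons_suffix_of_cons_suffix (suffix_of_mem_trees (Fintype.mem_piFinset.1 ht k) hs)
    (suffix_of_mem_trees (Fintype.mem_piFinset.1 ht k') hs')

theorem filter_suffix_biUnion_of_mem_piFinset_trees {t : Fin m → Finset (List (Fin m))}
    (ht : t ∈ Fintype.piFinset fun k => trees m d (k :: r)) (k : Fin m) :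
    (univ.biUnion t).filter (k :: r <:+ ·) = t k := by
  ext s
  simp only [mem_filter, mem_biUnion, mem_univ, true_and]
  constructor
  · rintro ⟨⟨k', hs⟩, hks⟩
    rwa [List.eq_of_cons_suffix_of_cons_suffix hks
      (suffix_of_mem_trees (Fintype.mem_piFinset.1 ht k') hs)]
  · exact fun hs => ⟨⟨k, hs⟩, suffix_of_mem_trees (Fintype.mem_piFinset.1 ht k) hs⟩

theorem injOn_biUnion_piFinset_trees :
    Set.InjOn (fun t : Fin m → Finset (List (Fin m)) => univ.biUnion t)
      (Fintype.piFinset fun k => trees m d (k :: r)) := by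
  intro t ht t' ht' h
  funext k
  rw [← filter_suffix_biUnion_of_mem_piFinset_trees ht k,
    ← filter_suffix_biUnion_of_mem_piFinset_trees ht' k]
  exact congrArg _ h

theorem singleton_notMem_image_biUnion_piFinset_trees :
    {r} ∉ (Fintype.piFinset fun k => trees m d (k :: r)).image fun t => univ.biUnion t := by
  intro h
  obtain ⟨t, ht, heq⟩ := mem_image.1 h
  obtain ⟨k, -, hk⟩ := mem_biUnion.1 (heq ▸ mem_singleton_self r)
  simpa using (suffix_of_mem_trees (Fintype.mem_piFinset.1 ht k) hk).length_le

theorem sum_prod_trees_succ {R : Type*} [CommSemiring R] (f : List (Fin m) → R) :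
    ∑ τ ∈ trees m (d + 1) r, ∏ s ∈ τ, f s =
      f r + ∏ k, ∑ τ ∈ trees m d (k :: r), ∏ s ∈ τ, f s := by
  rw [trees, sum_insert singleton_notMem_image_biUnion_piFinset_trees, prod_singleton,
    sum_image injOn_biUnion_piFinset_trees, prod_univ_sum]
  exact congrArg _ <| sum_congr rfl fun t ht =>
    prod_biUnion (pairwiseDisjoint_of_mem_piFinset_trees ht)

end Subtrees

theorem SigmaF_eq_sum_prod_trees {m : ℕ} (f : List (Fin m) → ℝ) (d : ℕ) (r : List (Fin m)) :
    SigmaF f d r = ∑ τ ∈ trees m d r, ∏ s ∈ τ, f s := by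
  induction d generalizing r with
  | zero => simp [SigmaF, trees]
  | succ d ih => simp only [SigmaF, ih, sum_prod_trees_succ]

/-- `Σ_F(λ) = ∑_{τ ∈ 𝒯_L} ∏_{s ∈ τ} f(s)`. -/
theorem sigma_eq_sum_over_trees (m L : ℕ) (f : List (Fin m) → ℝ) :
    SigmaF f L ([] : List (Fin m)) =
      ∑ τ ∈ trees m L ([] : List (Fin m)), ∏ s ∈ τ, f s :=
  SigmaF_eq_sum_prod_trees f L []
end

section
/- Define the pruning map T recursively: T(r) = {r} if ℓ(r) = L, or if ℓ(r) < L and f(r) ≥ ∏_{k=0}^{m-1} Υ_F(kr); otherwise T(r) = ∪_{k=0}^{m-1} T(kr). Then for every node r, ∏_{s ∈ T(r)} f(s) = Υ_F(r) = max over trees τ rooted at r of depth at most L − ℓ(r) of ∏_{s ∈ τ} f(s). In particular, T(λ) is a maximizer of the context-tree function F over 𝒯_L. -/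
open Finset

/-- The recursively-defined max functional `Υ_F`, with `d` the remaining depth. -/
def UpsF {m : ℕ} (f : List (Fin m) → ℝ) : ℕ → List (Fin m) → ℝ
  | 0, s => f s
  | (d + 1), s => max (f s) (∏ k : Fin m, UpsF f d (k :: s))

/-- The pruning map `T`: keep `{r}` at depth `L` (remaining depth `0`) or when
`f(r) ≥ ∏ₖ Υ_F(k r)`; otherwise recurse on the children. -/
noncomputable def pruneT {m : ℕ} (f : List (Fin m) → ℝ) : ℕ → List (Fin m) → Finset (List (Fin m))
  | 0, r => {r}
  | (d + 1), r =>
    if (∏ k : Fin m, UpsF f d (k :: r)) ≤ f r then {r}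
    else Finset.univ.biUnion (fun k => pruneT f d (k :: r))

/-- Every node in a tree rooted at `r` has `r` as a suffix. -/
lemma trees_suffix (m : ℕ) : ∀ d : ℕ, ∀ r : List (Fin m), ∀ τ ∈ trees m d r,
    ∀ s ∈ τ, r <:+ s := by
  intro d
  induction d with
  | zero =>
    intro r τ hτ s hs
    simp only [trees, Finset.mem_singleton] at hτ
    subst hτ
    simp only [Finset.mem_singleton] at hs
    subst hs
    exact List.suffix_refl _
  | succ d ih =>
    intro r τ hτ s hs
    simp only [trees, Finset.mem_insert, Finset.mem_image, Fintype.mem_piFinset] at hτ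
    rcases hτ with rfl | ⟨t, ht, rfl⟩
    · simp only [Finset.mem_singleton] at hs
      subst hs; exact List.suffix_refl _
    · simp only [Finset.mem_biUnion, Finset.mem_univ, true_and] at hs
      obtain ⟨k, hk⟩ := hs
      exact (List.suffix_cons k r).trans (ih (k :: r) (t k) (ht k) s hk)

/-- Trees rooted at distinct children are disjoint. -/
lemma trees_disjoint (m d : ℕ) (r : List (Fin m)) {k j : Fin m} (hkj : k ≠ j)
    {τk τj : Finset (List (Fin m))} (hk : τk ∈ trees m d (k :: r)) (hj : τj ∈ trees m d (j :: r)) :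
    Disjoint τk τj := by
  rw [Finset.disjoint_left]
  intro s hsk hsj
  have h1 : (k :: r) <:+ s := trees_suffix m d (k :: r) τk hk s hsk
  have h2 : (j :: r) <:+ s := trees_suffix m d (j :: r) τj hj s hsj
  have := List.suffix_or_suffix_of_suffix h1 h2
  have hlen : (k :: r).length = (j :: r).length := by simp
  rcases this with h | h
  · exact hkj (by simpa using (h.eq_of_length hlen))
  · exact hkj (by simpa using (h.eq_of_length hlen.symm).symm)

/-- for every node `r` (with remaining depth `d = L − ℓ(r)`),
`∏_{s ∈ T(r)} f(s) = Υ_F(r)`, `T(r)` is a tree rooted at `r` of depth at most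
`d`, and it maximizes `τ ↦ ∏_{s ∈ τ} f(s)` over all such trees.  In particular
(taking `r = λ`, `d = L`), `T(λ)` maximizes the context-tree function `F` over
`𝒯_L`. -/
theorem pruning_map_attains_max (m L : ℕ)
    (f : List (Fin m) → ℝ) (hf : ∀ s, 0 ≤ f s) :
    ∀ d : ℕ, ∀ r : List (Fin m),
      (∏ s ∈ pruneT f d r, f s) = UpsF f d r ∧
      pruneT f d r ∈ trees m d r ∧
      ∀ τ ∈ trees m d r, (∏ s ∈ τ, f s) ≤ ∏ s ∈ pruneT f d r, f s := by
  intro d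
  induction d with
  | zero =>
    intro r
    refine ⟨by simp [pruneT, UpsF], by simp [pruneT, trees], ?_⟩
    intro τ hτ
    simp only [trees, Finset.mem_singleton] at hτ
    subst hτ
    simp [pruneT]
  | succ d ih =>
    intro r
    have hprod : ∀ t : Fin m → Finset (List (Fin m)),
        (∀ k, t k ∈ trees m d (k :: r)) →
        (∏ s ∈ Finset.univ.biUnion (fun k => t k), f s) = ∏ k : Fin m, ∏ s ∈ t k, f s := by
      intro t ht
      refine Finset.prod_biUnion ?_
      intro k _ j _ hkj
      exact trees_disjoint m d r hkj (ht k) (ht j)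
    have key : (∏ s ∈ Finset.univ.biUnion (fun k => pruneT f d (k :: r)), f s)
        = ∏ k : Fin m, UpsF f d (k :: r) := by
      rw [hprod (fun k => pruneT f d (k :: r)) (fun k => (ih (k :: r)).2.1)]
      exact Finset.prod_congr rfl (fun k _ => (ih (k :: r)).1)
    have hle : ∀ τ ∈ trees m (d + 1) r, (∏ s ∈ τ, f s) ≤ UpsF f (d + 1) r := by
      intro τ hτ
      simp only [trees, Finset.mem_insert, Finset.mem_image, Fintype.mem_piFinset] at hτ
      rcases hτ with rfl | ⟨t, ht, rfl⟩
      · simp only [UpsF, Finset.prod_singleton]; exact le_max_left _ _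
      · rw [hprod t ht]
        refine le_trans ?_ (le_max_right (f r) _)
        refine Finset.prod_le_prod (fun k _ => Finset.prod_nonneg fun s _ => hf s) ?_
        intro k _
        rw [← (ih (k :: r)).1]
        exact (ih (k :: r)).2.2 (t k) (ht k)
    by_cases h : (∏ k : Fin m, UpsF f d (k :: r)) ≤ f r
    · have hT : pruneT f (d + 1) r = {r} := by simp [pruneT, h]
      have hval : (∏ s ∈ pruneT f (d + 1) r, f s) = UpsF f (d + 1) r := by
        rw [hT]; simp [UpsF, max_eq_left h]
      refine ⟨hval, ?_, ?_⟩
      · rw [hT]; simp [trees]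
      · intro τ hτ
        rw [hval]
        exact hle τ hτ
    · have hT : pruneT f (d + 1) r = Finset.univ.biUnion (fun k => pruneT f d (k :: r)) := by
        simp [pruneT, h]
      have hval : (∏ s ∈ pruneT f (d + 1) r, f s) = UpsF f (d + 1) r := by
        rw [hT, key]
        simp [UpsF, max_eq_right (le_of_lt (lt_of_not_ge h))]
      refine ⟨hval, ?_, ?_⟩
      · rw [hT]
        simp only [trees, Finset.mem_insert, Finset.mem_image, Fintype.mem_piFinset]
        exact Or.inr ⟨fun k => pruneT f d (k :: r), fun k => (ih (k :: r)).2.1, rfl⟩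
      · intro τ hτ
        rw [hval]
        exact hle τ hτ
end
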